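/- Let P be a finite poset and (x₁, x₂, …, xₙ) any linear extension of P. Then noncommutative order rowmotion NOR = T_{x₁} ∘ T_{x₂} ∘ ⋯ ∘ T_{xₙ} equals the composition Θ ∘ Δ⁻¹ ∘ ∇ of the noncommutative transfer maps: NOR(f) = Θ(Δ⁻¹(∇(f))) for every S-labeling f of P for which both sides are defined (i.e., every element inverted in the computation is nonzero). -/

import Mathlib

/-!
Noncommutative (skew field) antichain/order toggling and rowmotion on a finite poset `P`,
with labels in a division ring `S` and a fixed central element `C`, following
Joseph–Roby, "Birational and noncommutative lifts of antichain toggling and rowmotion".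
All maps are partial; definedness ("every element inverted in the computation is
nonzero") is recorded by explicit predicates.
-/

open Finset

attribute [local instance] Classical.propDecidable

variable {P : Type*} [Fintype P] [PartialOrder P] {S : Type*} [DivisionRing S]

/-- `c` is a saturated chain in `P`: consecutive entries are covers. -/
def SatChain {P : Type*} [PartialOrder P] {k : ℕ} (c : Fin (k + 1) → P) : Prop :=
  ∀ i : Fin k, c i.castSucc ⋖ c i.succ

/-- `c` is a maximal chain of `P`: a saturated chain from a minimal element to a maximal
element of `P` (equivalently, the restriction to `P` of a maximal chain
`0̂ ⋖ y₁ ⋖ ⋯ ⋖ y_k ⋖ 1̂` of `P̂`). -/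
def MaxChain {P : Type*} [PartialOrder P] {k : ℕ} (c : Fin (k + 1) → P) : Prop :=
  SatChain c ∧ IsMin (c 0) ∧ IsMax (c (Fin.last k))

/-- `∑_{u ∈ P̂, u ⋖ v} f(u)`, with the convention `f(0̂) = 1`. -/
noncomputable def lSum (f : P → S) (v : P) : S :=
  (if IsMin v then 1 else 0) + ∑ u ∈ univ.filter (fun u => u ⋖ v), f u

/-- `∑_{u ∈ P̂, u ⋗ v} f(u)⁻¹`, with the convention `f(1̂) = C`; its inverse is the
parallel sum `⫲_{u ∈ P̂, u ⋗ v} f(u)` (where `x ⫲ y = (x⁻¹ + y⁻¹)⁻¹`). -/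
noncomputable def uInvSum (C : S) (f : P → S) (v : P) : S :=
  (if IsMax v then C⁻¹ else 0) + ∑ u ∈ univ.filter (fun u => v ⋖ u), (f u)⁻¹

/-- The noncommutative order toggle `T_v`: it replaces the label at `v` by
`(∑_{u ∈ P̂, u ⋖ v} f(u)) · f(v)⁻¹ · (⫲_{u ∈ P̂, u ⋗ v} f(u))` and fixes all other
labels. -/
noncomputable def ncT (C : S) (v : P) (f : P → S) : P → S :=
  fun x => if x = v then lSum f v * (f v)⁻¹ * (uInvSum C f v)⁻¹ else f x

/-- The noncommutative order elggot `E_v`: it replaces the label at `v` by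
`(⫲_{u ∈ P̂, u ⋗ v} f(u)) · f(v)⁻¹ · (∑_{u ∈ P̂, u ⋖ v} f(u))` and fixes all other
labels. -/
noncomputable def ncE (C : S) (v : P) (f : P → S) : P → S :=
  fun x => if x = v then (uInvSum C f v)⁻¹ * (f v)⁻¹ * lSum f v else f x

/-- Definedness of one application of `T_v` or `E_v` to `f`: every element inverted in
the computation (the label `f(v)`, the labels `f(u)` of the upper covers `u` of `v` in
`P̂`, and the sum of their inverses) is nonzero. -/
def ncODef (C : S) (v : P) (f : P → S) : Prop :=
  f v ≠ 0 ∧ (∀ u : P, v ⋖ u → f u ≠ 0) ∧ (IsMax v → C ≠ 0) ∧ uInvSum C f v ≠ 0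

/-- The element `∑ g(y_{c-1})⋯g(y₁) · g(y_k)⋯g(y_c)` inverted by the noncommutative
antichain toggle `τ_v`, summed over all maximal chains `0̂ ⋖ y₁ ⋖ ⋯ ⋖ y_k ⋖ 1̂` of `P̂`
with `y_c = v` (indices decrease by 1 within each factor). -/
noncomputable def tauDenom (g : P → S) (v : P) : S :=
  ∑ k ∈ range (Fintype.card P),
    ∑ c ∈ univ.filter (fun c : Fin (k + 1) → P => MaxChain c),
      ∑ j ∈ univ.filter (fun j : Fin (k + 1) => c j = v),
        (((List.ofFn (g ∘ c)).take j.1).reverse).prod *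
          (((List.ofFn (g ∘ c)).drop j.1).reverse).prod

/-- The element `∑ g(y_c)⋯g(y₁) · g(y_k)⋯g(y_{c+1})` inverted by the noncommutative
antichain elggot `ε_v`, summed over all maximal chains `0̂ ⋖ y₁ ⋖ ⋯ ⋖ y_k ⋖ 1̂` of `P̂`
with `y_c = v`. -/
noncomputable def epsDenom (g : P → S) (v : P) : S :=
  ∑ k ∈ range (Fintype.card P),
    ∑ c ∈ univ.filter (fun c : Fin (k + 1) → P => MaxChain c),
      ∑ j ∈ univ.filter (fun j : Fin (k + 1) => c j = v),
        (((List.ofFn (g ∘ c)).take (j.1 + 1)).reverse).prod *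
          (((List.ofFn (g ∘ c)).drop (j.1 + 1)).reverse).prod

/-- The noncommutative antichain toggle `τ_v`: it replaces the label at `v` by
`C · (∑ g(y_{c-1})⋯g(y₁) · g(y_k)⋯g(y_c))⁻¹` and fixes all other labels. -/
noncomputable def ncTau (C : S) (v : P) (g : P → S) : P → S :=
  fun x => if x = v then C * (tauDenom g v)⁻¹ else g x

/-- The noncommutative antichain elggot `ε_v`: it replaces the label at `v` by
`C · (∑ g(y_c)⋯g(y₁) · g(y_k)⋯g(y_{c+1}))⁻¹` and fixes all other labels. -/
noncomputable def ncEps (C : S) (v : P) (g : P → S) : P → S :=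
  fun x => if x = v then C * (epsDenom g v)⁻¹ else g x

/-- The noncommutative complement `Θ`: `(Θf)(x) = C · f(x)⁻¹`. -/
noncomputable def ncTheta (C : S) (f : P → S) : P → S := fun x => C * (f x)⁻¹

/-- The noncommutative down transfer `∇`:
`(∇f)(x) = f(x) · (∑_{y ∈ P̂, y ⋖ x} f(y))⁻¹` with `f(0̂) = 1`. -/
noncomputable def ncNabla (f : P → S) : P → S := fun x => f x * (lSum f x)⁻¹

/-- The noncommutative inverse up transfer `Δ⁻¹`:
`(Δ⁻¹f)(x) = ∑ f(y_k)⋯f(y₂)f(y₁)` over all saturated chains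
`x = y₁ ⋖ y₂ ⋖ ⋯ ⋖ y_k ⋖ 1̂` in `P̂`. -/
noncomputable def ncDeltaInv (f : P → S) : P → S := fun x =>
  ∑ k ∈ range (Fintype.card P),
    ∑ c ∈ univ.filter (fun c : Fin (k + 1) → P =>
        SatChain c ∧ c 0 = x ∧ IsMax (c (Fin.last k))),
      ((List.ofFn (f ∘ c)).reverse).prod

/-- The noncommutative inverse down transfer `∇⁻¹`:
`(∇⁻¹f)(x) = ∑ f(y_k)⋯f(y₂)f(y₁)` over all saturated chains
`0̂ ⋖ y₁ ⋖ y₂ ⋖ ⋯ ⋖ y_k = x` in `P̂`. -/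
noncomputable def ncNablaInv (f : P → S) : P → S := fun x =>
  ∑ k ∈ range (Fintype.card P),
    ∑ c ∈ univ.filter (fun c : Fin (k + 1) → P =>
        SatChain c ∧ IsMin (c 0) ∧ c (Fin.last k) = x),
      ((List.ofFn (f ∘ c)).reverse).prod

/-- `l` is a linear extension of `P`: it lists every element of `P` exactly once, and
`l[i] < l[j]` in `P` implies `i < j`. -/
def IsLinearExtension {P : Type*} [PartialOrder P] (l : List P) : Prop :=
  l.Nodup ∧ (∀ x : P, x ∈ l) ∧
    ∀ (i j : ℕ) (hi : i < l.length) (hj : j < l.length), l[i]'hi < l[j]'hj → i < j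

/-- `l` is a linear extension of the subposet `A` of `P`. -/
def IsLinearExtensionOn {P : Type*} [PartialOrder P] (A : Set P) (l : List P) : Prop :=
  l.Nodup ∧ (∀ x : P, x ∈ l ↔ x ∈ A) ∧
    ∀ (i j : ℕ) (hi : i < l.length) (hj : j < l.length), l[i]'hi < l[j]'hj → i < j

/-- Stepwise definedness of applying the noncommutative order toggles `T` along a list
(first element of the list applied first). -/
def ncOTogsDef (C : S) : List P → (P → S) → Prop
  | [], _ => True
  | v :: l, f => ncODef C v f ∧ ncOTogsDef C l (ncT C v f)

/-!
Write `h = Θ(Δ⁻¹(∇f))`. Peeling the first cover off a saturated chain gives the recursion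
`(Δ⁻¹g)(x) = (1_{x maximal} + ∑_{x ⋖ u} (Δ⁻¹g)(u)) · g(x)`, and with `g = ∇f` and `C` central
this says exactly that toggling `x` in a labeling that agrees with `f` below `x` and with `h`
above `x` produces `h(x)`. Toggling along the reversed linear extension always meets such a
labeling, since each toggled element lies above nothing toggled before it, so the
labels are replaced by those of `h` one at a time.
-/

theorem SatChain.strictMono {α : Type*} [PartialOrder α] {k : ℕ} {c : Fin (k + 1) → α}
    (h : SatChain c) : StrictMono c :=
  Fin.strictMono_iff_lt_succ.2 fun i => (h i).lt

theorem satChain_cons_iff {α : Type*} [PartialOrder α] {k : ℕ} {x : α}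
    {c : Fin (k + 1) → α} :
    SatChain (Fin.cons x c : Fin (k + 2) → α) ↔ x ⋖ c 0 ∧ SatChain c := by
  simp [SatChain, Fin.forall_fin_succ]

theorem IsLinearExtension.pairwise {α : Type*} [PartialOrder α] {l : List α}
    (hl : IsLinearExtension l) : l.Pairwise fun a b => ¬ b ≤ a := by
  have hlt : l.Pairwise fun a b => ¬ b < a :=
    List.pairwise_iff_getElem.2 fun i j hi hj hij hji => by
      have := hl.2.2 j i hj hi hji
      omega
  exact (hl.1.and hlt).imp fun ⟨hne, hnlt⟩ hle => hnlt (hle.lt_of_ne hne.symm)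

section UpChains

variable (g : P → S)

/-- `ncDeltaInv g x` is by definition `∑ k < Fintype.card P, upChainSum g k x`. -/
noncomputable def upChainSum (k : ℕ) (x : P) : S :=
  ∑ c ∈ univ.filter (fun c : Fin (k + 1) → P =>
      SatChain c ∧ c 0 = x ∧ IsMax (c (Fin.last k))),
    ((List.ofFn (g ∘ c)).reverse).prod

theorem upChainSum_zero (x : P) :
    upChainSum g 0 x = (if IsMax x then 1 else 0) * g x := by
  rw [upChainSum, sum_filter, ← Fintype.sum_equiv (Equiv.funUnique (Fin 1) P).symm
    (fun y => if y = x ∧ IsMax y then g y else 0) _ (fun y => by simp [SatChain])]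
  simp [ite_and]

theorem upChainSum_succ (k : ℕ) (x : P) :
    upChainSum g (k + 1) x
      = (∑ u ∈ univ.filter (fun u => x ⋖ u), upChainSum g k u) * g x := by
  simp only [upChainSum, sum_mul]
  rw [sum_comm' (t' := univ.filter fun c : Fin (k + 1) → P =>
      x ⋖ c 0 ∧ SatChain c ∧ IsMax (c (Fin.last k))) (s' := fun c => {c 0})
      (fun u c => by simp only [mem_filter, mem_univ, mem_singleton]; grind),
    sum_filter, sum_filter, ← Fintype.sum_equiv (Fin.consEquiv fun _ => P) _ _ (fun _ => rfl),
    Fintype.sum_prod_type, sum_eq_single x (fun y _ hy => by simp [hy]) (by simp)]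
  simp [Fin.consEquiv, satChain_cons_iff, ← Fin.succ_last, and_assoc, mul_assoc]

/-- A saturated chain with `Fintype.card P` elements exhausts `P`, so it starts at a minimal
element. -/
theorem upChainSum_eq_zero_of_lt {m : ℕ} (hm : Fintype.card P = m + 1) {x u : P}
    (hxu : x < u) : upChainSum g m u = 0 := by
  refine sum_eq_zero fun c hc => ?_
  obtain ⟨hsat, rfl, -⟩ := (mem_filter.1 hc).2
  have hbij : Function.Bijective c :=
    (Fintype.bijective_iff_injective_and_card c).2 ⟨hsat.strictMono.injective, by simp [hm]⟩
  obtain ⟨j, rfl⟩ := hbij.2 x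
  exact absurd (hsat.strictMono.monotone (Fin.zero_le j)) hxu.not_ge

theorem ncDeltaInv_eq_mul (x : P) :
    ncDeltaInv g x
      = ((if IsMax x then 1 else 0) + ∑ u ∈ univ.filter (fun u => x ⋖ u), ncDeltaInv g u)
          * g x := by
  obtain ⟨m, hm⟩ : ∃ m, Fintype.card P = m + 1 :=
    Nat.exists_eq_succ_of_ne_zero (Fintype.card_pos_iff.2 ⟨x⟩).ne'
  have hsum : ∀ y, ncDeltaInv g y = ∑ k ∈ range (m + 1), upChainSum g k y := fun y => by
    rw [← hm]; rfl
  have hcut : ∀ u ∈ univ.filter (fun u => x ⋖ u),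
      ∑ k ∈ range m, upChainSum g k u = ncDeltaInv g u := fun u hu => by
    rw [hsum, sum_range_succ, upChainSum_eq_zero_of_lt g hm (mem_filter.1 hu).2.lt, add_zero]
  simp_rw [hsum x, sum_range_succ', upChainSum_succ, ← sum_mul, sum_comm (s := range m)]
  rw [sum_congr rfl hcut, upChainSum_zero, add_mul, add_comm]

end UpChains

theorem lSum_congr {f f' : P → S} {v : P} (h : ∀ u, u ⋖ v → f u = f' u) :
    lSum f v = lSum f' v := by
  unfold lSum
  congr 1
  exact sum_congr rfl fun u hu => h u (mem_filter.1 hu).2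

theorem uInvSum_congr {C : S} {f f' : P → S} {v : P} (h : ∀ u, v ⋖ u → f u = f' u) :
    uInvSum C f v = uInvSum C f' v := by
  unfold uInvSum
  congr 1
  exact sum_congr rfl fun u hu => by rw [h u (mem_filter.1 hu).2]

theorem uInvSum_ncTheta (C : S) (g : P → S) (v : P) :
    uInvSum C (ncTheta C g) v
      = ((if IsMax v then 1 else 0) + ∑ u ∈ univ.filter (fun u => v ⋖ u), g u) * C⁻¹ := by
  simp [uInvSum, ncTheta, add_mul, sum_mul, apply_ite (· * C⁻¹)]

theorem ncT_value_theta_deltaInv_nabla {C : S} (hC : ∀ s : S, C * s = s * C) (f : P → S)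
    (v : P) :
    lSum f v * (f v)⁻¹ * (uInvSum C (ncTheta C (ncDeltaInv (ncNabla f))) v)⁻¹
      = ncTheta C (ncDeltaInv (ncNabla f)) v := by
  rw [uInvSum_ncTheta, ncTheta, ncDeltaInv_eq_mul, ncNabla]
  simp only [mul_inv_rev, inv_inv, ← mul_assoc, hC (lSum f v * (f v)⁻¹)]

theorem foldr_ncT_eq_ite {C : S} {f g : P → S}
    (hg : ∀ v, lSum f v * (f v)⁻¹ * (uInvSum C g v)⁻¹ = g v) {t : List P}
    (ht : t.Pairwise fun a b => ¬ b ≤ a) (hup : ∀ v ∈ t, ∀ u, v < u → u ∈ t) :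
    t.foldr (ncT C) f = fun x => if x ∈ t then g x else f x := by
  induction t with
  | nil => simp
  | cons v t ih =>
    obtain ⟨hbelow, ht⟩ := List.pairwise_cons.1 ht
    have hup' : ∀ a ∈ t, ∀ u, a < u → u ∈ t := fun a ha u hau => by
      rcases List.mem_cons.1 (hup a (List.mem_cons_of_mem v ha) u hau) with rfl | hu
      exacts [absurd hau.le (hbelow a ha), hu]
    have hv : v ∉ t := fun hv => hbelow v hv le_rfl
    rw [List.foldr_cons, ih ht hup']
    funext x
    by_cases hx : x = v
    · subst hx
      have hlow : lSum (fun y => if y ∈ t then g y else f y) x = lSum f x :=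
        lSum_congr fun u hu => if_neg fun hut => hbelow u hut hu.le
      have hhigh : uInvSum C (fun y => if y ∈ t then g y else f y) x = uInvSum C g x :=
        uInvSum_congr fun u hu => if_pos <|
          (List.mem_cons.1 (hup x List.mem_cons_self u hu.lt)).resolve_left hu.lt.ne'
      rw [ncT, if_pos rfl, if_pos List.mem_cons_self, if_neg hv, hlow, hhigh, hg]
    · simp [ncT, hx]

theorem NOR_eq_theta_deltaInv_nabla_general (C : S) (hC : ∀ s : S, C * s = s * C)
    (l : List P) (hl : IsLinearExtension l) (f : P → S) :
    l.foldr (fun v h => ncT C v h) f = ncTheta C (ncDeltaInv (ncNabla f)) := by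
  rw [foldr_ncT_eq_ite (ncT_value_theta_deltaInv_nabla hC f) hl.pairwise
    fun _ _ u _ => hl.2.1 u]
  exact funext fun x => if_pos (hl.2.1 x)

/-- For any linear extension `(x₁,…,xₙ)` of `P`, noncommutative order
rowmotion `NOR = T_{x₁} ∘ T_{x₂} ∘ ⋯ ∘ T_{xₙ}` (rightmost toggle applied first) equals
the composition `Θ ∘ Δ⁻¹ ∘ ∇` of the noncommutative transfer maps, on every `S`-labeling
for which both sides are defined. -/
theorem NOR_eq_theta_deltaInv_nabla (C : S) (hC : ∀ s : S, C * s = s * C)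
    (l : List P) (hl : IsLinearExtension l) (f : P → S)
    (hdefL : ncOTogsDef C l.reverse f)
    (hdefNabla : ∀ x : P, lSum f x ≠ 0)
    (hdefTheta : ∀ x : P, ncDeltaInv (ncNabla f) x ≠ 0) :
    l.foldr (fun v h => ncT C v h) f = ncTheta C (ncDeltaInv (ncNabla f)) :=
  NOR_eq_theta_deltaInv_nabla_general C hC l hl f
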